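/- Fix a spin weight s∈ℤ, an integer ℓ≥|s|, and σ∈ℂ with σ≠0. Set L=(ℓ−s)(ℓ+s+1) and S=(s+1)(2s+1), and define a sequence (cₙ) of complex numbers by c₀=1, c₁=L/(2σ), and for all n≥0: 2σ(n+2)c_{n+2} = [L − (n+1)(n+2s+2)]c_{n+1} + [n(n+3s+2)+S]cₙ. Then for every N∈ℕ, the truncated Thomé series y_N(ρ) = Σ_{n=0}^{N} cₙ ρ^{−n} satisfies y_N''(ρ) + P(ρ,σ)y_N'(ρ) + Q(ρ)y_N(ρ) = O(ρ^{−(N+2)}) as ρ→∞ along (1,∞). -/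

import Mathlib

noncomputable section

/-- `P(ρ,σ) = −2σ − (3s+1)/ρ + (1+s−2σ)/(ρ−1)`. -/
def Pcoef (s : ℤ) (σ ρ : ℂ) : ℂ := -2*σ - (3*(s:ℂ)+1)/ρ + (1+(s:ℂ)-2*σ)/(ρ-1)

/-- `Q(ρ) = (s+1)(2s+1)/ρ² − ((s+1)²+ℓ(ℓ+1))/(ρ(ρ−1))`. -/
def Qcoef (s ℓ : ℤ) (ρ : ℂ) : ℂ :=
  ((s:ℂ)+1)*(2*(s:ℂ)+1)/ρ^2 - (((s:ℂ)+1)^2 + (ℓ:ℂ)*((ℓ:ℂ)+1))/(ρ*(ρ-1))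

/-- The truncated Thomé series `y_N(ρ) = Σ_{n=0}^{N} cₙ ρ^{−n}`. -/
def thomePartial (c : ℕ → ℂ) (N : ℕ) (ρ : ℝ) : ℂ :=
  ∑ n ∈ Finset.range (N+1), c n * (ρ:ℂ)^(-(n:ℤ))

/-!
Multiplied by `ρ²(ρ - 1)`, the Heun operator sends `ρ⁻ⁿ` to a combination of `ρ^{2-n}`, `ρ^{1-n}`
and `ρ⁻ⁿ`. The three-term recursion (with `c₀`, `c₁` supplying its first two instances) is exactly
the vanishing of the coefficient of each power in the image of `y_N`, so the sum telescopes to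
the two boundary terms `ρ^{1-N}` and `ρ⁻ᴺ`. Dividing back by `ρ²(ρ - 1)` leaves `ρ^{-(N+2)}` times a
function of `1/ρ` that is continuous at `0`, hence bounded as `ρ → ∞`.
-/

open Finset Filter Asymptotics

theorem sum_range_mul_three_term_eq {R : Type*} [CommRing R] (a b d c : ℕ → R)
    (h₀ : a 0 * c 0 = 0) (h₁ : a 1 * c 1 + b 0 * c 0 = 0)
    (hrec : ∀ n, a (n + 2) * c (n + 2) + b (n + 1) * c (n + 1) + d n * c n = 0)
    (x : R) (N : ℕ) :
    ∑ n ∈ range (N + 1), c n * (a n * x ^ n + b n * x ^ (n + 1) + d n * x ^ (n + 2)) =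
      d N * c N * x ^ (N + 2) - a (N + 1) * c (N + 1) * x ^ (N + 1) := by
  induction N with
  | zero => simp only [zero_add, sum_range_one]; linear_combination h₀ + x * h₁
  | succ N ih =>
    rw [sum_range_succ, ih]
    linear_combination x ^ (N + 2) * hrec N

theorem hasDerivAt_ofReal_inv_pow (m : ℕ) {t : ℝ} (ht : t ≠ 0) :
    HasDerivAt (fun u : ℝ => ((u : ℂ)⁻¹) ^ m) (-(m : ℂ) * ((t : ℂ)⁻¹) ^ (m + 1)) t := by
  have h := (hasDerivAt_zpow (-(m : ℤ)) (t : ℂ) (.inl (Complex.ofReal_ne_zero.2 ht))).comp_ofReal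
  simp only [← inv_zpow', zpow_natCast] at h
  convert h using 1
  rw [show -(m : ℤ) - 1 = -((m + 1 : ℕ) : ℤ) by push_cast; ring, ← inv_zpow', zpow_natCast]
  push_cast; ring

theorem thomePartial_eq_sum_inv_pow (c : ℕ → ℂ) (N : ℕ) :
    thomePartial c N = fun t : ℝ => ∑ n ∈ range (N + 1), c n * ((t : ℂ)⁻¹) ^ n := by
  ext t; simp only [thomePartial, zpow_neg, zpow_natCast, inv_pow]

theorem hasDerivAt_thomePartial (c : ℕ → ℂ) (N : ℕ) {t : ℝ} (ht : t ≠ 0) :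
    HasDerivAt (thomePartial c N)
      (∑ n ∈ range (N + 1), -(n : ℂ) * c n * ((t : ℂ)⁻¹) ^ (n + 1)) t := by
  rw [thomePartial_eq_sum_inv_pow]
  refine (HasDerivAt.fun_sum fun n _ =>
    (hasDerivAt_ofReal_inv_pow n ht).const_mul (c n)).congr_deriv ?_
  exact sum_congr rfl fun n _ => by ring

theorem hasDerivAt_deriv_thomePartial (c : ℕ → ℂ) (N : ℕ) {t : ℝ} (ht : t ≠ 0) :
    HasDerivAt (deriv (thomePartial c N))
      (∑ n ∈ range (N + 1), (n : ℂ) * (n + 1) * c n * ((t : ℂ)⁻¹) ^ (n + 2)) t := by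
  have hderiv : deriv (thomePartial c N) =ᶠ[nhds t]
      fun u => ∑ n ∈ range (N + 1), -(n : ℂ) * c n * ((u : ℂ)⁻¹) ^ (n + 1) := by
    filter_upwards [eventually_ne_nhds ht] with u hu using (hasDerivAt_thomePartial c N hu).deriv
  refine ((HasDerivAt.fun_sum fun n _ =>
    (hasDerivAt_ofReal_inv_pow (n + 1) ht).const_mul (-(n : ℂ) * c n)).congr_deriv ?_)
      |>.congr_of_eventuallyEq hderiv
  refine sum_congr rfl fun n _ => ?_
  push_cast; ring

def thomeRemainder (s : ℤ) (σ : ℂ) (c : ℕ → ℂ) (N : ℕ) (x : ℂ) : ℂ :=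
  (-((N : ℂ) * (N + 3 * s + 2) + (s + 1) * (2 * s + 1)) * c N * x -
    2 * σ * (N + 1) * c (N + 1)) / (1 - x)

theorem continuousAt_thomeRemainder_zero (s : ℤ) (σ : ℂ) (c : ℕ → ℂ) (N : ℕ) :
    ContinuousAt (thomeRemainder s σ c N) 0 := by
  unfold thomeRemainder
  exact ContinuousAt.div (by fun_prop) (by fun_prop) (by norm_num)

theorem heun_sum_inv_pow_eq (s ℓ : ℤ) (σ : ℂ) (hσ : σ ≠ 0) (c : ℕ → ℂ)
    (hc0 : c 0 = 1)
    (hc1 : c 1 = ((ℓ:ℂ)-(s:ℂ))*((ℓ:ℂ)+(s:ℂ)+1) / (2*σ))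
    (hrec : ∀ n : ℕ,
      2*σ*((n:ℂ)+2) * c (n+2) =
        (((ℓ:ℂ)-(s:ℂ))*((ℓ:ℂ)+(s:ℂ)+1) - ((n:ℂ)+1)*((n:ℂ)+2*(s:ℂ)+2)) * c (n+1) +
          ((n:ℂ)*((n:ℂ)+3*(s:ℂ)+2) + ((s:ℂ)+1)*(2*(s:ℂ)+1)) * c n)
    (N : ℕ) {x : ℂ} (hx₀ : x ≠ 0) (hx₁ : x ≠ 1) :
    ∑ n ∈ range (N + 1), (n : ℂ) * (n + 1) * c n * x ^ (n + 2) +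
        Pcoef s σ x⁻¹ * ∑ n ∈ range (N + 1), -(n : ℂ) * c n * x ^ (n + 1) +
        Qcoef s ℓ x⁻¹ * ∑ n ∈ range (N + 1), c n * x ^ n =
      x ^ (N + 2) * thomeRemainder s σ c N x := by
  have hx₁' : 1 - x ≠ 0 := sub_ne_zero.2 hx₁.symm
  -- `ρ²(ρ - 1) (y'' + P y' + Q y)` maps `ρ⁻ⁿ` to
  -- `2σn ρ^{2-n} + (n(n+2s+1) - L) ρ^{1-n} - (n(n+3s+2) + S) ρ⁻ⁿ`
  have htel := sum_range_mul_three_term_eq (fun n => 2 * σ * n)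
    (fun n => n * (n + 2 * s + 1) - (ℓ - s) * (ℓ + s + 1))
    (fun n => -((n : ℂ) * (n + 3 * s + 2) + (s + 1) * (2 * s + 1))) c (by simp)
    (by rw [hc0, hc1]; field_simp; push_cast; ring)
    (fun n => by push_cast; linear_combination hrec n) x N
  push_cast at htel
  have hP : (1 - x) * Pcoef s σ x⁻¹ =
      -2 * σ * (1 - x) - (3 * s + 1) * x * (1 - x) + (1 + s - 2 * σ) * x := by
    unfold Pcoef; field_simp
  have hQ : (1 - x) * Qcoef s ℓ x⁻¹ =
      (s + 1) * (2 * s + 1) * x ^ 2 * (1 - x) - ((s + 1) ^ 2 + ℓ * (ℓ + 1)) * x ^ 2 := by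
    unfold Qcoef; field_simp
  have hsum : (1 - x) * ∑ n ∈ range (N + 1), (n : ℂ) * (n + 1) * c n * x ^ (n + 2) +
      (-2 * σ * (1 - x) - (3 * s + 1) * x * (1 - x) + (1 + s - 2 * σ) * x) *
        ∑ n ∈ range (N + 1), -(n : ℂ) * c n * x ^ (n + 1) +
      ((s + 1) * (2 * s + 1) * x ^ 2 * (1 - x) - ((s + 1) ^ 2 + ℓ * (ℓ + 1)) * x ^ 2) *
        ∑ n ∈ range (N + 1), c n * x ^ n =
      x * ∑ n ∈ range (N + 1), c n * (2 * σ * n * x ^ n +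
        (n * (n + 2 * s + 1) - (ℓ - s) * (ℓ + s + 1)) * x ^ (n + 1) +
        -((n : ℂ) * (n + 3 * s + 2) + (s + 1) * (2 * s + 1)) * x ^ (n + 2)) := by
    simp only [mul_sum, ← sum_add_distrib]
    exact sum_congr rfl fun n _ => by ring
  rw [thomeRemainder, mul_div_assoc', eq_div_iff hx₁']
  linear_combination (∑ n ∈ range (N + 1), -(n : ℂ) * c n * x ^ (n + 1)) * hP +
    (∑ n ∈ range (N + 1), c n * x ^ n) * hQ + hsum + x * htel

theorem heun_thomePartial_eq_sum_inv_pow (s ℓ : ℤ) (σ : ℂ) (c : ℕ → ℂ) (N : ℕ) {ρ : ℝ}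
    (hρ : ρ ≠ 0) :
    deriv (deriv (thomePartial c N)) ρ + Pcoef s σ ρ * deriv (thomePartial c N) ρ +
        Qcoef s ℓ ρ * thomePartial c N ρ =
      ∑ n ∈ range (N + 1), (n : ℂ) * (n + 1) * c n * ((ρ : ℂ)⁻¹) ^ (n + 2) +
        Pcoef s σ (ρ : ℂ)⁻¹⁻¹ * ∑ n ∈ range (N + 1), -(n : ℂ) * c n * ((ρ : ℂ)⁻¹) ^ (n + 1) +
        Qcoef s ℓ (ρ : ℂ)⁻¹⁻¹ * ∑ n ∈ range (N + 1), c n * ((ρ : ℂ)⁻¹) ^ n := by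
  rw [(hasDerivAt_deriv_thomePartial c N hρ).deriv, (hasDerivAt_thomePartial c N hρ).deriv,
    thomePartial_eq_sum_inv_pow, inv_inv]

theorem isBigO_inv_pow_mul_comp_inv {g : ℂ → ℂ} (hg : ContinuousAt g 0) (m : ℕ) :
    (fun ρ : ℝ => ((ρ : ℂ)⁻¹) ^ m * g (ρ : ℂ)⁻¹) =O[atTop] fun ρ : ℝ => ρ ^ (-(m : ℤ)) := by
  have hinv : Tendsto (fun ρ : ℝ => (ρ : ℂ)⁻¹) atTop (nhds 0) := by
    simpa using tendsto_inv_atTop_zero.ofReal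
  have hpow : (fun ρ : ℝ => ((ρ : ℂ)⁻¹) ^ m) =O[atTop] fun ρ : ℝ => ρ ^ (-(m : ℤ)) :=
    isBigO_of_le _ fun ρ => by simp [zpow_neg]
  simpa using hpow.mul ((hg.tendsto.comp hinv).isBigO_one ℝ)

theorem thome_truncation_residual_general
    (s ℓ : ℤ) (σ : ℂ) (hσ : σ ≠ 0) (c : ℕ → ℂ)
    (hc0 : c 0 = 1)
    (hc1 : c 1 = ((ℓ:ℂ)-(s:ℂ))*((ℓ:ℂ)+(s:ℂ)+1) / (2*σ))
    (hrec : ∀ n : ℕ,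
      2*σ*((n:ℂ)+2) * c (n+2) =
        (((ℓ:ℂ)-(s:ℂ))*((ℓ:ℂ)+(s:ℂ)+1) - ((n:ℂ)+1)*((n:ℂ)+2*(s:ℂ)+2)) * c (n+1) +
          ((n:ℂ)*((n:ℂ)+3*(s:ℂ)+2) + ((s:ℂ)+1)*(2*(s:ℂ)+1)) * c n)
    (N : ℕ) :
    (fun ρ : ℝ =>
        deriv (deriv (thomePartial c N)) ρ +
          Pcoef s σ (ρ:ℂ) * deriv (thomePartial c N) ρ +
          Qcoef s ℓ (ρ:ℂ) * thomePartial c N ρ)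
      =O[Filter.atTop] fun ρ : ℝ => ρ ^ (-(N:ℤ) - 2) := by
  have hexp : -(N : ℤ) - 2 = -((N + 2 : ℕ) : ℤ) := by push_cast; ring
  rw [hexp]
  refine (isBigO_inv_pow_mul_comp_inv (continuousAt_thomeRemainder_zero s σ c N) (N + 2)).congr'
    ?_ EventuallyEq.rfl
  filter_upwards [eventually_gt_atTop 1] with ρ hρ
  have hρ₀ : ρ ≠ 0 := by positivity
  rw [heun_thomePartial_eq_sum_inv_pow s ℓ σ c N hρ₀,
    heun_sum_inv_pow_eq s ℓ σ hσ c hc0 hc1 hrec N (inv_ne_zero (by exact_mod_cast hρ₀))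
      (inv_ne_one.2 (by exact_mod_cast hρ.ne'))]

/-- The truncated Thomé series built from the three-term recursion (Appendix A)
solves the confluent Heun normal form up to a residual `O(ρ^{−(N+2)})` as
`ρ → ∞`. Here `L = (ℓ−s)(ℓ+s+1)` and `S = (s+1)(2s+1)`. -/
theorem thome_truncation_residual
    (s ℓ : ℤ) (hsl : |s| ≤ ℓ) (σ : ℂ) (hσ : σ ≠ 0) (c : ℕ → ℂ)
    (hc0 : c 0 = 1)
    (hc1 : c 1 = ((ℓ:ℂ)-(s:ℂ))*((ℓ:ℂ)+(s:ℂ)+1) / (2*σ))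
    (hrec : ∀ n : ℕ,
      2*σ*((n:ℂ)+2) * c (n+2) =
        (((ℓ:ℂ)-(s:ℂ))*((ℓ:ℂ)+(s:ℂ)+1) - ((n:ℂ)+1)*((n:ℂ)+2*(s:ℂ)+2)) * c (n+1) +
          ((n:ℂ)*((n:ℂ)+3*(s:ℂ)+2) + ((s:ℂ)+1)*(2*(s:ℂ)+1)) * c n)
    (N : ℕ) :
    (fun ρ : ℝ =>
        deriv (deriv (thomePartial c N)) ρ +
          Pcoef s σ (ρ:ℂ) * deriv (thomePartial c N) ρ +
          Qcoef s ℓ (ρ:ℂ) * thomePartial c N ρ)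
      =O[Filter.atTop] fun ρ : ℝ => ρ ^ (-(N:ℤ) - 2) :=
  thome_truncation_residual_general s ℓ σ hσ c hc0 hc1 hrec N
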